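/- The identity g(T(w,x),T(y,z)) + g(T(w,y),T(z,x)) + g(T(w,z),T(x,y)) = 0 holds for all w,x,y,z ∈ V if and only if T satisfies the Jacobi identity T(x,T(y,z)) + T(y,T(z,x)) + T(z,T(x,y)) = 0 for all x,y,z ∈ V. -/
import Mathlib


variable {V : Type*} [AddCommGroup V] [Module ℝ V] [FiniteDimensional ℝ V]

/-- `g(T(w,x),T(y,z)) + g(T(w,y),T(z,x)) + g(T(w,z),T(x,y)) = 0` for all `w,x,y,z` if and
only if `T` satisfies the Jacobi identity. -/
theorem quartic_identity_iff_jacobi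
    (g : V →ₗ[ℝ] V →ₗ[ℝ] ℝ)
    (hg_symm : ∀ x y : V, g x y = g y x)
    (hg_nondeg : ∀ x : V, (∀ y : V, g x y = 0) → x = 0)
    (T : V →ₗ[ℝ] V →ₗ[ℝ] V)
    (hT_alt : ∀ x y : V, T x y = - T y x)
    (hT_skew : ∀ x y z : V, g (T x y) z = - g (T x z) y) :
    (∀ w x y z : V,
      g (T w x) (T y z) + g (T w y) (T z x) + g (T w z) (T x y) = 0) ↔
    (∀ x y z : V, T x (T y z) + T y (T z x) + T z (T x y) = 0) := by
  have key : ∀ w x y z : V,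
      g (T x (T y z) + T y (T z x) + T z (T x y)) w =
      g (T w x) (T y z) + g (T w y) (T z x) + g (T w z) (T x y) := by
    intro w x y z
    have h1 : ∀ a b c : V, g (T a (T b c)) w = g (T w a) (T b c) := by
      intro a b c
      rw [hT_skew a (T b c) w, hT_alt a w, map_neg, LinearMap.neg_apply, neg_neg]
    simp only [map_add, LinearMap.add_apply, h1]
  constructor
  · intro h x y z
    apply hg_nondeg
    intro w
    rw [key w x y z, h w x y z]
  · intro h w x y z
    rw [← key w x y z, h x y z, map_zero, LinearMap.zero_apply]
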